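/- Let a, b, c ∈ ℝ³ be mutually orthogonal vectors of equal positive magnitude with det(a, b, c) > 0, and suppose ψ, ψ' ∈ ℂ² are spinors both satisfying a + ib = ψᵗσψ, c = −ψ̂ᵗσψ and a + ib = ψ'ᵗσψ', c = −ψ̂'ᵗσψ'. Then ψ' = ψ or ψ' = −ψ (the spinor is determined up to sign). -/

import Mathlib

open Matrix Complex

/-- The first Cartan spinor matrix σ₁ = [[1,0],[0,−1]]. -/
noncomputable def sigma1 : Matrix (Fin 2) (Fin 2) ℂ := !![1, 0; 0, -1]

/-- The second Cartan spinor matrix σ₂ = [[i,0],[0,i]]. -/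
noncomputable def sigma2 : Matrix (Fin 2) (Fin 2) ℂ := !![Complex.I, 0; 0, Complex.I]

/-- The third Cartan spinor matrix σ₃ = [[0,−1],[−1,0]]. -/
noncomputable def sigma3 : Matrix (Fin 2) (Fin 2) ℂ := !![0, -1; -1, 0]

/-- For spinors φ, ψ ∈ ℂ², the vector φᵗσψ ∈ ℂ³ whose j-th component is φᵗσⱼψ. -/
noncomputable def spinorBilin (φ ψ : Fin 2 → ℂ) : Fin 3 → ℂ :=
  ![φ ⬝ᵥ sigma1.mulVec ψ, φ ⬝ᵥ sigma2.mulVec ψ, φ ⬝ᵥ sigma3.mulVec ψ]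

/-- The mate (conjugate) of a spinor ψ: ψ̂ = (−ψ̄₂, ψ̄₁). -/
noncomputable def mate (ψ : Fin 2 → ℂ) : Fin 2 → ℂ :=
  ![-(starRingEnd ℂ) (ψ 1), (starRingEnd ℂ) (ψ 0)]

/-- View a triple of reals as a vector in Euclidean 3-space. -/
noncomputable def toE3 (v : Fin 3 → ℝ) : EuclideanSpace ℝ (Fin 3) := WithLp.toLp 2 v

/-! The components of `ψᵗσψ` are linear combinations of `ψ₀², ψ₁², ψ₀ψ₁` which can be solved
back for them, so `ψᵗσψ` determines the rank-one matrix `ψψᵗ`; and over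
an integral domain `xxᵗ` determines `x` up to sign: if `y_k ≠ 0` then `x_k = ±y_k`, and cancelling
`y_k` from `x_k x_i = y_k y_i` gives `x_i = ±y_i` with the same sign. -/

theorem eq_or_eq_neg_of_vecMulVec_self_eq {ι R : Type*} [CommRing R] [NoZeroDivisors R]
    {x y : ι → R} (h : vecMulVec x x = vecMulVec y y) : x = y ∨ x = -y := by
  have hxy : ∀ i j, x i * x j = y i * y j := fun i j => by
    simpa only [vecMulVec_apply] using congrFun (congrFun h i) j
  by_cases hy : y = 0
  · subst hy
    exact Or.inl <| funext fun i => mul_self_eq_zero.1 (by simpa using hxy i i)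
  obtain ⟨k, hk⟩ := Function.ne_iff.1 hy
  rcases mul_self_eq_mul_self_iff.1 (hxy k k) with e | e
  · exact Or.inl <| funext fun i =>
      mul_left_cancel₀ hk (by linear_combination hxy k i - x i * e)
  · exact Or.inr <| funext fun i =>
      mul_left_cancel₀ hk (by simp only [Pi.neg_apply]; linear_combination -hxy k i + x i * e)

theorem spinorBilin_self (ψ : Fin 2 → ℂ) :
    spinorBilin ψ ψ = ![ψ 0 * ψ 0 - ψ 1 * ψ 1, I * (ψ 0 * ψ 0 + ψ 1 * ψ 1), -(2 * ψ 0 * ψ 1)] := by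
  ext j
  fin_cases j <;> simp only [spinorBilin, sigma1, sigma2, sigma3, dotProduct, mulVec, of_apply,
    cons_val', cons_val_fin_one, cons_val_zero, cons_val_one, cons_val, Fin.zero_eta, Fin.mk_one,
    Fin.reduceFinMk, Fin.sum_univ_two] <;> ring

theorem vecMulVec_self_eq_of_spinorBilin (ψ : Fin 2 → ℂ) :
    vecMulVec ψ ψ =
      !![(spinorBilin ψ ψ 0 - I * spinorBilin ψ ψ 1) / 2, -spinorBilin ψ ψ 2 / 2;
        -spinorBilin ψ ψ 2 / 2, -(spinorBilin ψ ψ 0 + I * spinorBilin ψ ψ 1) / 2] := by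
  rw [spinorBilin_self]
  ext i j
  fin_cases i <;> fin_cases j <;> simp only [vecMulVec_apply, of_apply,
    cons_val', cons_val_fin_one, cons_val_zero, cons_val_one, cons_val, Fin.zero_eta, Fin.mk_one,
    ← mul_assoc, I_mul_I] <;> ring

theorem eq_or_eq_neg_of_spinorBilin_self_eq {φ ψ : Fin 2 → ℂ}
    (h : spinorBilin φ φ = spinorBilin ψ ψ) : φ = ψ ∨ φ = -ψ :=
  eq_or_eq_neg_of_vecMulVec_self_eq <| by
    rw [vecMulVec_self_eq_of_spinorBilin, vecMulVec_self_eq_of_spinorBilin, h]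

theorem spinor_of_triad_unique_up_to_sign_general (a b : Fin 3 → ℝ)
    (ψ ψ' : Fin 2 → ℂ)
    (hψ1 : ∀ j, (a j : ℂ) + Complex.I * (b j : ℂ) = spinorBilin ψ ψ j)
    (hψ'1 : ∀ j, (a j : ℂ) + Complex.I * (b j : ℂ) = spinorBilin ψ' ψ' j) :
    ψ' = ψ ∨ ψ' = -ψ :=
  eq_or_eq_neg_of_spinorBilin_self_eq <| funext fun j => (hψ'1 j).symm.trans (hψ1 j)

/-- The spinor representing an orthogonal triad a, b, c of equal positive magnitude
with det(a,b,c) > 0 is determined up to sign. -/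
theorem spinor_of_triad_unique_up_to_sign (a b c : Fin 3 → ℝ)
    (hab : inner ℝ (toE3 a) (toE3 b) = (0 : ℝ))
    (hac : inner ℝ (toE3 a) (toE3 c) = (0 : ℝ))
    (hbc : inner ℝ (toE3 b) (toE3 c) = (0 : ℝ))
    (habn : ‖toE3 a‖ = ‖toE3 b‖) (hbcn : ‖toE3 b‖ = ‖toE3 c‖)
    (hpos : 0 < ‖toE3 a‖)
    (hdet : 0 < (Matrix.of ![a, b, c]).det)
    (ψ ψ' : Fin 2 → ℂ)
    (hψ1 : ∀ j, (a j : ℂ) + Complex.I * (b j : ℂ) = spinorBilin ψ ψ j)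
    (hψ2 : ∀ j, (c j : ℂ) = -(spinorBilin (mate ψ) ψ j))
    (hψ'1 : ∀ j, (a j : ℂ) + Complex.I * (b j : ℂ) = spinorBilin ψ' ψ' j)
    (hψ'2 : ∀ j, (c j : ℂ) = -(spinorBilin (mate ψ') ψ' j)) :
    ψ' = ψ ∨ ψ' = -ψ :=
  spinor_of_triad_unique_up_to_sign_general a b ψ ψ' hψ1 hψ'1
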